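/- arXiv:math/0409113 — 4 statements merged into one kernel-verified Lean document; each statement's English description precedes it below -/
import Mathlib

section
/- For any two interval neutrosophic sets A and B, △A ∩ △B ⊆ △(A ∩ B), where △ is the truth-favorite operator. -/
noncomputable section

open unitInterval

/-- An interval neutrosophic set on `X`: six component functions into `[0,1]`. -/
structure INS (X : Type*) where
  infT : X → I
  supT : X → I
  infI : X → I
  supI : X → I
  infF : X → I
  supF : X → I

namespace INS

variable {X : Type*}

/-- Containment of interval neutrosophic sets. -/
def Subset (A B : INS X) : Prop :=
  ∀ x, A.infT x ≤ B.infT x ∧ A.supT x ≤ B.supT x ∧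
    B.infI x ≤ A.infI x ∧ B.supI x ≤ A.supI x ∧
    B.infF x ≤ A.infF x ∧ B.supF x ≤ A.supF x

/-- Union of interval neutrosophic sets. -/
def union (A B : INS X) : INS X where
  infT x := max (A.infT x) (B.infT x)
  supT x := max (A.supT x) (B.supT x)
  infI x := min (A.infI x) (B.infI x)
  supI x := min (A.supI x) (B.supI x)
  infF x := min (A.infF x) (B.infF x)
  supF x := min (A.supF x) (B.supF x)

/-- Intersection of interval neutrosophic sets. -/
def inter (A B : INS X) : INS X where
  infT x := min (A.infT x) (B.infT x)
  supT x := min (A.supT x) (B.supT x)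
  infI x := max (A.infI x) (B.infI x)
  supI x := max (A.supI x) (B.supI x)
  infF x := max (A.infF x) (B.infF x)
  supF x := max (A.supF x) (B.supF x)

/-- Complement of an interval neutrosophic set. -/
def compl (A : INS X) : INS X where
  infT := A.infF
  supT := A.supF
  infI x := σ (A.supI x)
  supI x := σ (A.infI x)
  infF := A.infT
  supF := A.supT

/-- Truncated addition on `[0,1]`: `min (a + b) 1`. -/
def tadd (a b : I) : I :=
  ⟨min ((a : ℝ) + b) 1, le_min (add_nonneg a.2.1 b.2.1) zero_le_one, min_le_right _ _⟩

/-- Addition of interval neutrosophic sets. -/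
def add (A B : INS X) : INS X where
  infT x := tadd (A.infT x) (B.infT x)
  supT x := tadd (A.supT x) (B.supT x)
  infI x := tadd (A.infI x) (B.infI x)
  supI x := tadd (A.supI x) (B.supI x)
  infF x := tadd (A.infF x) (B.infF x)
  supF x := tadd (A.supF x) (B.supF x)

/-- Truth-favorite operator. -/
def tfav (A : INS X) : INS X where
  infT x := tadd (A.infT x) (A.infI x)
  supT x := tadd (A.supT x) (A.supI x)
  infI _ := 0
  supI _ := 0
  infF := A.infF
  supF := A.supF

/-- False-favorite operator. -/
def ffav (A : INS X) : INS X where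
  infT := A.infT
  supT := A.supT
  infI _ := 0
  supI _ := 0
  infF x := tadd (A.infF x) (A.infI x)
  supF x := tadd (A.supF x) (A.supI x)

end INS
open INS

lemma tadd_mono {a b c d : I} (h1 : a ≤ c) (h2 : b ≤ d) : tadd a b ≤ tadd c d :=
  Subtype.mk_le_mk.2 (min_le_min (add_le_add h1 h2) le_rfl)

lemma min_tadd_le {a b c d : I} : min (tadd a b) (tadd c d) ≤ tadd (min a c) (max b d) := by
  rcases le_total a c with h | h
  · rw [min_eq_left h]
    exact (min_le_left _ _).trans (tadd_mono le_rfl (le_max_left _ _))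
  · rw [min_eq_right h]
    exact (min_le_right _ _).trans (tadd_mono le_rfl (le_max_right _ _))

theorem inter_tfav_subset {X : Type*} (A B : INS X) :
    Subset (inter (tfav A) (tfav B)) (tfav (inter A B)) :=
  fun x => ⟨min_tadd_le, min_tadd_le, by simp [tfav, inter], by simp [tfav, inter],
    le_refl _, le_refl _⟩
end
end

section
/- For any two interval neutrosophic sets A and B, ∇(A ∩ B) ⊆ ∇A ∩ ∇B, where ∇ is the false-favorite operator. -/
noncomputable section

open unitInterval

open INS

namespace INS

variable {X : Type*}

theorem tadd_le_tadd {a b c d : I} (hac : a ≤ c) (hbd : b ≤ d) : tadd a b ≤ tadd c d :=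
  Subtype.mk_le_mk.mpr (min_le_min_right 1 (add_le_add hac hbd))

theorem inter_subset_left (A B : INS X) : Subset (inter A B) A := fun _ =>
  ⟨min_le_left _ _, min_le_left _ _, le_max_left _ _, le_max_left _ _, le_max_left _ _,
    le_max_left _ _⟩

theorem inter_subset_right (A B : INS X) : Subset (inter A B) B := fun _ =>
  ⟨min_le_right _ _, min_le_right _ _, le_max_right _ _, le_max_right _ _, le_max_right _ _,
    le_max_right _ _⟩

theorem subset_inter {A B C : INS X} (hA : Subset C A) (hB : Subset C B) :
    Subset C (inter A B) := fun x => by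
  obtain ⟨hA₁, hA₂, hA₃, hA₄, hA₅, hA₆⟩ := hA x
  obtain ⟨hB₁, hB₂, hB₃, hB₄, hB₅, hB₆⟩ := hB x
  exact ⟨le_min hA₁ hB₁, le_min hA₂ hB₂, max_le hA₃ hB₃, max_le hA₄ hB₄, max_le hA₅ hB₅,
    max_le hA₆ hB₆⟩

theorem ffav_subset_ffav {A B : INS X} (h : Subset A B) : Subset (ffav A) (ffav B) := fun x => by
  obtain ⟨hT₁, hT₂, hI₁, hI₂, hF₁, hF₂⟩ := h x
  exact ⟨hT₁, hT₂, le_rfl, le_rfl, tadd_le_tadd hF₁ hI₁, tadd_le_tadd hF₂ hI₂⟩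

end INS

theorem ffav_inter_subset {X : Type*} (A B : INS X) :
    Subset (ffav (inter A B)) (inter (ffav A) (ffav B)) :=
  subset_inter (ffav_subset_ffav (inter_subset_left A B))
    (ffav_subset_ffav (inter_subset_right A B))
end
end

section
/- The truth-favorite operator distributes over addition of interval neutrosophic sets: △(A + B) = △A + △B; similarly ∇(A + B) = ∇A + ∇B for the false-favorite operator. -/
noncomputable section

open unitInterval

open INS

lemma key_min (a b c d : ℝ) (ha : 0 ≤ a) (hb : 0 ≤ b) (hc : 0 ≤ c) (hd : 0 ≤ d) :
    min (min (a + b) 1 + min (c + d) 1) 1 = min (a + b + c + d) 1 := by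
  rcases le_or_gt (a+b) 1 with h1 | h1 <;> rcases le_or_gt (c+d) 1 with h2 | h2 <;>
    simp [min_def] <;> split_ifs <;> linarith

lemma tadd_swap (a b c d : I) : tadd (tadd a b) (tadd c d) = tadd (tadd a c) (tadd b d) := by
  apply Subtype.ext
  show min (min ((a:ℝ)+b) 1 + min ((c:ℝ)+d) 1) 1 = min (min ((a:ℝ)+c) 1 + min ((b:ℝ)+d) 1) 1
  rw [key_min _ _ _ _ a.2.1 b.2.1 c.2.1 d.2.1, key_min _ _ _ _ a.2.1 c.2.1 b.2.1 d.2.1]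
  ring_nf

lemma tadd_zero_zero : tadd (0 : I) (0 : I) = 0 := by
  apply Subtype.ext
  show min ((0:ℝ) + 0) 1 = 0
  norm_num

theorem favorite_add {X : Type*} (A B : INS X) :
    tfav (add A B) = add (tfav A) (tfav B) ∧
      ffav (add A B) = add (ffav A) (ffav B) := by
  constructor <;>
  · simp only [tfav, ffav, add, INS.mk.injEq]
    refine ⟨?_, ?_, ?_, ?_, ?_, ?_⟩ <;>
      first
        | trivial
        | (funext x; simp [tadd_swap, tadd_zero_zero])
end
end

section
/- If A and B are strongly convex interval neutrosophic sets on a real vector space, then their intersection A ∩ B is strongly convex. -/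
noncomputable section

open unitInterval

open INS

/-- Strong convexity of an interval neutrosophic set on a real vector space. -/
def INS.StronglyConvex {E : Type*} [AddCommGroup E] [Module ℝ E] (A : INS E) : Prop :=
  ∀ (x₁ x₂ : E), x₁ ≠ x₂ → ∀ (l : ℝ), 0 < l → l < 1 →
    min (A.infT x₁) (A.infT x₂) < A.infT (l • x₁ + (1 - l) • x₂) ∧
    min (A.supT x₁) (A.supT x₂) < A.supT (l • x₁ + (1 - l) • x₂) ∧
    A.infI (l • x₁ + (1 - l) • x₂) < max (A.infI x₁) (A.infI x₂) ∧
    A.supI (l • x₁ + (1 - l) • x₂) < max (A.supI x₁) (A.supI x₂) ∧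
    A.infF (l • x₁ + (1 - l) • x₂) < max (A.infF x₁) (A.infF x₂) ∧
    A.supF (l • x₁ + (1 - l) • x₂) < max (A.supF x₁) (A.supF x₂)

theorem stronglyConvex_inter {E : Type*} [AddCommGroup E] [Module ℝ E] (A B : INS E)
    (hA : A.StronglyConvex) (hB : B.StronglyConvex) : (inter A B).StronglyConvex := by
  intro x₁ x₂ hne l hl0 hl1
  obtain ⟨a1, a2, a3, a4, a5, a6⟩ := hA x₁ x₂ hne l hl0 hl1
  obtain ⟨b1, b2, b3, b4, b5, b6⟩ := hB x₁ x₂ hne l hl0 hl1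
  refine ⟨?_, ?_, ?_, ?_, ?_, ?_⟩ <;> simp only [inter]
  · exact lt_min (lt_of_le_of_lt (min_le_min (min_le_left _ _) (min_le_left _ _)) a1)
      (lt_of_le_of_lt (min_le_min (min_le_right _ _) (min_le_right _ _)) b1)
  · exact lt_min (lt_of_le_of_lt (min_le_min (min_le_left _ _) (min_le_left _ _)) a2)
      (lt_of_le_of_lt (min_le_min (min_le_right _ _) (min_le_right _ _)) b2)
  · exact max_lt (lt_of_lt_of_le a3 (max_le_max (le_max_left _ _) (le_max_left _ _)))
      (lt_of_lt_of_le b3 (max_le_max (le_max_right _ _) (le_max_right _ _)))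
  · exact max_lt (lt_of_lt_of_le a4 (max_le_max (le_max_left _ _) (le_max_left _ _)))
      (lt_of_lt_of_le b4 (max_le_max (le_max_right _ _) (le_max_right _ _)))
  · exact max_lt (lt_of_lt_of_le a5 (max_le_max (le_max_left _ _) (le_max_left _ _)))
      (lt_of_lt_of_le b5 (max_le_max (le_max_right _ _) (le_max_right _ _)))
  · exact max_lt (lt_of_lt_of_le a6 (max_le_max (le_max_left _ _) (le_max_left _ _)))
      (lt_of_lt_of_le b6 (max_le_max (le_max_right _ _) (le_max_right _ _)))
end
end
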